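/- Let H be a Hilbert space and let u₁, …, u_N, v₁, …, v_N ∈ H with ‖u_j − v_j‖ < ς for all j. Let P_U and P_V denote the orthogonal projections onto span{u_j} and span{v_j} respectively, and assume {u_j} is linearly independent with Gram matrix bounded below by c·Id for some c > 0. Then there exists a constant C depending only on c, N, and max_j ‖u_j‖ such that ‖P_U h − P_V h‖ ≤ Cς‖h‖ for all h ∈ H, provided ς is sufficiently small. -/

import Mathlib

/-!
Write `a = P_U h` and `w = h - a ⊥ U`, so that `P_U h - P_V h = (a - P_V a) - P_V w`.
The first term is small because `a ∈ U` is close to `V`: if `a = ∑ aᵢ uᵢ`, then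
`∑ aᵢ vᵢ ∈ V` lies within `√N ς ‖(aᵢ)‖₂ ≤ √N ς ‖a‖ / √c` of `a`, by the Gram bound.
The second is small by duality: `‖P_V w‖² = ⟪P_V w - P_U P_V w, w⟫`, and `P_V w ∈ V` is
close to `U` by the same argument with `u` and `v` exchanged, which applies because for
small `ς` the Gram matrix of the `vᵢ` is still bounded below by `c / 4`.
-/

open Finset

section Projection

variable {𝕜 E : Type*} [RCLike 𝕜] [NormedAddCommGroup E] [InnerProductSpace 𝕜 E]
  {U V : Submodule 𝕜 E} [U.HasOrthogonalProjection] [V.HasOrthogonalProjection]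

theorem Submodule.norm_sub_starProjection_le_of_mem (x : E) {z : E} (hz : z ∈ V) :
    ‖x - V.starProjection x‖ ≤ ‖x - z‖ := by
  rw [starProjection_minimal]
  exact ciInf_le ⟨0, Set.forall_mem_range.2 fun _ ↦ norm_nonneg _⟩ (⟨z, hz⟩ : V)

theorem Submodule.norm_starProjection_le_of_mem_orthogonal {ε : ℝ} (hε : 0 ≤ ε)
    (hV : ∀ y ∈ V, ‖y - U.starProjection y‖ ≤ ε * ‖y‖) {w : E} (hw : w ∈ Uᗮ) :
    ‖V.starProjection w‖ ≤ ε * ‖w‖ := by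
  set y := V.starProjection w
  have key : ‖y‖ * ‖y‖ ≤ ε * ‖w‖ * ‖y‖ := calc
    ‖y‖ * ‖y‖ = RCLike.re (inner 𝕜 y w) := by
      rw [← sq, V.re_inner_starProjection_eq_normSq w]; rfl
    _ = RCLike.re (inner 𝕜 (y - U.starProjection y) w) := by
      rw [inner_sub_left, hw _ (U.starProjection_apply_mem y), sub_zero]
    _ ≤ ‖y - U.starProjection y‖ * ‖w‖ := re_inner_le_norm _ _
    _ ≤ ε * ‖y‖ * ‖w‖ := by gcongr; exact hV y (V.starProjection_apply_mem w)
    _ = ε * ‖w‖ * ‖y‖ := by ring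
  rcases (norm_nonneg y).eq_or_lt with hy | hy
  · rw [← hy]; positivity
  · exact le_of_mul_le_mul_right key hy

theorem Submodule.norm_starProjection_sub_starProjection_le {δ ε : ℝ} (hδ : 0 ≤ δ)
    (hε : 0 ≤ ε)
    (hU : ∀ x ∈ U, ‖x - V.starProjection x‖ ≤ δ * ‖x‖)
    (hV : ∀ y ∈ V, ‖y - U.starProjection y‖ ≤ ε * ‖y‖) (h : E) :
    ‖U.starProjection h - V.starProjection h‖ ≤ (δ + ε) * ‖h‖ := by
  set a := U.starProjection h
  set w := Uᗮ.starProjection h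
  have hsplit : V.starProjection h = V.starProjection a + V.starProjection w := by
    rw [← map_add, U.starProjection_add_starProjection_orthogonal]
  calc ‖a - V.starProjection h‖ = ‖(a - V.starProjection a) - V.starProjection w‖ := by
        rw [hsplit, sub_add_eq_sub_sub]
    _ ≤ δ * ‖a‖ + ε * ‖w‖ :=
        (norm_sub_le _ _).trans <| add_le_add (hU a (U.starProjection_apply_mem h))
          (norm_starProjection_le_of_mem_orthogonal hε hV (Uᗮ.starProjection_apply_mem h))
    _ ≤ δ * ‖h‖ + ε * ‖h‖ := by
        gcongr
        exacts [U.norm_starProjection_apply_le h, Uᗮ.norm_starProjection_apply_le h]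
    _ = (δ + ε) * ‖h‖ := by ring

end Projection

theorem EuclideanSpace.sum_norm_le_sqrt_card_mul_norm {𝕜 ι : Type*} [RCLike 𝕜] [Fintype ι]
    (a : EuclideanSpace 𝕜 ι) : ∑ i, ‖a i‖ ≤ √(Fintype.card ι) * ‖a‖ := by
  rw [EuclideanSpace.norm_eq, ← Real.sqrt_mul (Nat.cast_nonneg _)]
  refine Real.le_sqrt_of_sq_le ?_
  simpa using sq_sum_le_card_mul_sum_sq (s := univ) (f := fun i ↦ ‖a i‖)

section RieszBound

variable {𝕜 E ι : Type*} [RCLike 𝕜] [NormedAddCommGroup E] [Fintype ι]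

variable (𝕜) in
/-- For `m ≥ 0` this says that the Gram matrix of `u` is bounded below by `m² • 1`. -/
def IsRieszLowerBound [Module 𝕜 E] (m : ℝ) (u : ι → E) : Prop :=
  ∀ a : EuclideanSpace 𝕜 ι, m * ‖a‖ ≤ ‖∑ i, a i • u i‖

section Normed

variable [NormedSpace 𝕜 E] {u v : ι → E} {m ς : ℝ}

theorem norm_sum_smul_sub_sum_smul_le (hς : 0 ≤ ς) (huv : ∀ i, ‖u i - v i‖ ≤ ς)
    (a : EuclideanSpace 𝕜 ι) :
    ‖∑ i, a i • u i - ∑ i, a i • v i‖ ≤ √(Fintype.card ι) * ς * ‖a‖ := calc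
  _ = ‖∑ i, a i • (u i - v i)‖ := by simp only [smul_sub, sum_sub_distrib]
  _ ≤ ∑ i, ‖a i‖ * ς :=
      norm_sum_le_of_le _ fun i _ ↦ by rw [norm_smul]; gcongr; exact huv i
  _ = (∑ i, ‖a i‖) * ς := (sum_mul ..).symm
  _ ≤ √(Fintype.card ι) * ‖a‖ * ς := by
      gcongr; exact EuclideanSpace.sum_norm_le_sqrt_card_mul_norm a
  _ = _ := by ring

theorem IsRieszLowerBound.mono {m' : ℝ} (hu : IsRieszLowerBound 𝕜 m u) (hm' : m' ≤ m) :
    IsRieszLowerBound 𝕜 m' u :=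
  fun a ↦ (mul_le_mul_of_nonneg_right hm' (norm_nonneg a)).trans (hu a)

theorem IsRieszLowerBound.of_norm_sub_le (hu : IsRieszLowerBound 𝕜 m u) (hς : 0 ≤ ς)
    (huv : ∀ i, ‖u i - v i‖ ≤ ς) :
    IsRieszLowerBound 𝕜 (m - √(Fintype.card ι) * ς) v := fun a ↦ by
  linarith [hu a, norm_sub_norm_le (∑ i, a i • u i) (∑ i, a i • v i),
    norm_sum_smul_sub_sum_smul_le hς huv a]

end Normed

theorem IsRieszLowerBound.norm_sub_starProjection_le [InnerProductSpace 𝕜 E] {u v : ι → E}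
    {m ς : ℝ} (hu : IsRieszLowerBound 𝕜 m u) (hm : 0 < m) (hς : 0 ≤ ς)
    (huv : ∀ i, ‖u i - v i‖ ≤ ς) [(Submodule.span 𝕜 (Set.range v)).HasOrthogonalProjection]
    {x : E} (hx : x ∈ Submodule.span 𝕜 (Set.range u)) :
    ‖x - (Submodule.span 𝕜 (Set.range v)).starProjection x‖
      ≤ √(Fintype.card ι) * ς / m * ‖x‖ := by
  obtain ⟨a, rfl⟩ := (Submodule.mem_span_range_iff_exists_fun 𝕜).1 hx
  set b : EuclideanSpace 𝕜 ι := WithLp.toLp 2 a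
  have hb : ‖b‖ ≤ ‖∑ i, a i • u i‖ / m := (le_div_iff₀' hm).2 (hu b)
  calc _ ≤ ‖∑ i, a i • u i - ∑ i, a i • v i‖ :=
        Submodule.norm_sub_starProjection_le_of_mem _
          ((Submodule.mem_span_range_iff_exists_fun 𝕜).2 ⟨a, rfl⟩)
    _ ≤ √(Fintype.card ι) * ς * ‖b‖ := norm_sum_smul_sub_sum_smul_le hς huv b
    _ ≤ √(Fintype.card ι) * ς * (‖∑ i, a i • u i‖ / m) := by gcongr
    _ = _ := by ring

theorem norm_sum_smul_sq_eq_sum_sum_inner [InnerProductSpace ℝ E] (u : ι → E) (a : ι → ℝ) :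
    ‖∑ i, a i • u i‖ ^ 2 = ∑ i, ∑ j, a i * a j * inner ℝ (u i) (u j) := by
  simp only [← real_inner_self_eq_norm_sq, sum_inner, inner_sum, real_inner_smul_left,
    real_inner_smul_right]
  exact sum_congr rfl fun i _ ↦ sum_congr rfl fun j _ ↦ by rw [real_inner_comm]; ring

theorem isRieszLowerBound_sqrt_of_gram [InnerProductSpace ℝ E] {u : ι → E} {c : ℝ}
    (hc : 0 ≤ c)
    (hGram : ∀ x : ι → ℝ, c * ∑ i, x i ^ 2 ≤ ∑ i, ∑ j, x i * x j * inner ℝ (u i) (u j)) :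
    IsRieszLowerBound ℝ (√c) u := fun a ↦ by
  refine (pow_le_pow_iff_left₀ (by positivity) (norm_nonneg _) two_ne_zero).1 ?_
  rw [mul_pow, Real.sq_sqrt hc, EuclideanSpace.real_norm_sq_eq,
    norm_sum_smul_sq_eq_sum_sum_inner]
  exact hGram a

end RieszBound

theorem stmt10_general {H : Type*} [NormedAddCommGroup H] [InnerProductSpace ℝ H]
    (N : ℕ) (u : Fin N → H)
    (c : ℝ) (hc : 0 < c)
    (hGram : ∀ x : Fin N → ℝ,
      c * ∑ i, (x i) ^ 2 ≤ ∑ i, ∑ j, x i * x j * (inner ℝ (u i) (u j) : ℝ)) :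
    ∃ ς₀ > (0:ℝ), ∃ C > (0:ℝ), ∀ ς : ℝ, 0 < ς → ς < ς₀ →
      ∀ v : Fin N → H, (∀ j, ‖u j - v j‖ < ς) →
        ∀ h : H,
          haveI : FiniteDimensional ℝ (Submodule.span ℝ (Set.range u)) :=
            FiniteDimensional.span_of_finite ℝ (Set.finite_range u)
          haveI : FiniteDimensional ℝ (Submodule.span ℝ (Set.range v)) :=
            FiniteDimensional.span_of_finite ℝ (Set.finite_range v)
          ‖(Submodule.orthogonalProjectionOnto (Submodule.span ℝ (Set.range u)) h : H) -
            (Submodule.orthogonalProjectionOnto (Submodule.span ℝ (Set.range v)) h : H)‖ ≤ C * ς * ‖h‖ := by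
  set n := √(Fintype.card (Fin N) : ℝ)
  have hm : 0 < √c := Real.sqrt_pos.2 hc
  have hu := isRieszLowerBound_sqrt_of_gram hc.le hGram
  refine ⟨√c / (2 * (n + 1)), by positivity, 3 * (n + 1) / √c, by positivity,
    fun ς hς hςlt v hv h ↦ ?_⟩
  have := FiniteDimensional.span_of_finite ℝ (Set.finite_range u)
  have := FiniteDimensional.span_of_finite ℝ (Set.finite_range v)
  have huv : ∀ j, ‖u j - v j‖ ≤ ς := fun j ↦ (hv j).le
  have hvu : ∀ j, ‖v j - u j‖ ≤ ς := fun j ↦ norm_sub_rev (u j) (v j) ▸ huv j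
  have hsmall : n * ς ≤ √c / 2 := by
    rw [lt_div_iff₀ (by positivity)] at hςlt
    nlinarith
  have hv' : IsRieszLowerBound ℝ (√c / 2) v := (hu.of_norm_sub_le hς.le huv).mono (by linarith)
  simp only [Submodule.coe_orthogonalProjectionOnto_apply]
  calc _ ≤ (n * ς / √c + n * ς / (√c / 2)) * ‖h‖ :=
        Submodule.norm_starProjection_sub_starProjection_le (by positivity) (by positivity)
          (fun x hx ↦ hu.norm_sub_starProjection_le hm hς.le huv hx)
          (fun y hy ↦ hv'.norm_sub_starProjection_le (by positivity) hς.le hvu hy) h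
    _ = 3 * n / √c * ς * ‖h‖ := by field_simp; ring
    _ ≤ 3 * (n + 1) / √c * ς * ‖h‖ := by gcongr; linarith

theorem stmt10 {H : Type*} [NormedAddCommGroup H] [InnerProductSpace ℝ H] [CompleteSpace H]
    (N : ℕ) (u : Fin N → H) (hu : LinearIndependent ℝ u)
    (c : ℝ) (hc : 0 < c)
    (hGram : ∀ x : Fin N → ℝ,
      c * ∑ i, (x i) ^ 2 ≤ ∑ i, ∑ j, x i * x j * (inner ℝ (u i) (u j) : ℝ)) :
    ∃ ς₀ > (0:ℝ), ∃ C > (0:ℝ), ∀ ς : ℝ, 0 < ς → ς < ς₀ →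
      ∀ v : Fin N → H, (∀ j, ‖u j - v j‖ < ς) →
        ∀ h : H,
          haveI : FiniteDimensional ℝ (Submodule.span ℝ (Set.range u)) :=
            FiniteDimensional.span_of_finite ℝ (Set.finite_range u)
          haveI : FiniteDimensional ℝ (Submodule.span ℝ (Set.range v)) :=
            FiniteDimensional.span_of_finite ℝ (Set.finite_range v)
          ‖(Submodule.orthogonalProjectionOnto (Submodule.span ℝ (Set.range u)) h : H) -
            (Submodule.orthogonalProjectionOnto (Submodule.span ℝ (Set.range v)) h : H)‖ ≤ C * ς * ‖h‖ :=
  stmt10_general N u c hc hGram
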